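/- arXiv:1803.03082 — 3 statements merged into one kernel-verified Lean document; each statement's English description precedes it below -/
import Mathlib

section
/- Let α_n be a real sequence with α_1 = ln a_1 and α_n = 2α_{n-1} + ln r_{n-1} for n ≥ 2, where 1 ≤ r_j ≤ 4 for all j. Then lim_{n→∞} α_n/(2^{n+1}−1) = (1/4)(ln a_1 + Σ_{j=1}^{∞} 2^{−j} ln r_j). -/
open Filter

theorem stmt_5 (α r : ℕ → ℝ) (a₁ : ℝ) (ha : 0 < a₁)
    (hr : ∀ j, 1 ≤ r j ∧ r j ≤ 4)
    (hinit : α 1 = Real.log a₁)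
    (hrec : ∀ n ≥ 2, α n = 2 * α (n - 1) + Real.log (r (n - 1))) :
    Filter.Tendsto (fun n : ℕ => α n / (2 ^ (n + 1) - 1)) Filter.atTop
      (nhds ((1 / 4) * (Real.log a₁ + ∑' j : ℕ, (1 / 2 : ℝ) ^ (j + 1) * Real.log (r (j + 1))))) := by
  set f : ℕ → ℝ := fun j => (1 / 2 : ℝ) ^ (j + 1) * Real.log (r (j + 1)) with hf
  have hsum : Summable f := by
    refine Summable.of_nonneg_of_le (f := fun j => (1/2:ℝ)^j * Real.log 4)
      (fun j => mul_nonneg (by positivity) (Real.log_nonneg (hr (j+1)).1)) (fun j => ?_)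
      ((summable_geometric_of_lt_one (by norm_num) (by norm_num)).mul_right _)
    apply mul_le_mul
    · exact pow_le_pow_of_le_one (by norm_num) (by norm_num) (Nat.le_succ j)
    · exact Real.log_le_log (by linarith [(hr (j+1)).1]) (hr (j+1)).2
    · exact Real.log_nonneg (hr (j+1)).1
    · positivity
  set P : ℕ → ℝ := fun m => Real.log a₁ + ∑ j ∈ Finset.range m, f j with hP
  have key : ∀ m, α (m + 1) = 2 ^ m * P m := by
    intro m
    induction m with
    | zero => simp [hP, hinit]
    | succ m ih =>
      have h := hrec (m + 2) (by omega)
      simp only [show m + 2 - 1 = m + 1 from rfl] at h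
      rw [show m + 1 + 1 = m + 2 from rfl, h, ih, hP]
      simp only [Finset.sum_range_succ, hf]
      have h2 : (1/2:ℝ)^(m+1) = ((2:ℝ)^(m+1))⁻¹ := by rw [one_div, inv_pow]
      rw [h2]
      field_simp
      ring
  set L : ℝ := Real.log a₁ + ∑' j, f j with hL
  have hPlim : Tendsto P atTop (nhds L) :=
    tendsto_const_nhds.add hsum.hasSum.tendsto_sum_nat
  have hP1 : Tendsto (fun n : ℕ => P (n - 1)) atTop (nhds L) :=
    hPlim.comp (tendsto_sub_atTop_nat 1)
  have hgeo : Tendsto (fun n : ℕ => ((1:ℝ)/2) ^ (n - 1)) atTop (nhds 0) :=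
    (tendsto_pow_atTop_nhds_zero_of_lt_one (by norm_num) (by norm_num)).comp
      (tendsto_sub_atTop_nat 1)
  have hden : Tendsto (fun n : ℕ => 4 - ((1:ℝ)/2)^(n-1)) atTop (nhds 4) := by
    simpa using (tendsto_const_nhds (x := (4:ℝ))).sub hgeo
  have hdiv : Tendsto (fun n : ℕ => P (n-1) / (4 - (1/2:ℝ)^(n-1))) atTop (nhds (L / 4)) :=
    hP1.div hden (by norm_num)
  have heq : (fun n : ℕ => P (n-1) / (4 - (1/2:ℝ)^(n-1))) =ᶠ[atTop]
      (fun n : ℕ => α n / (2 ^ (n + 1) - 1)) := by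
    filter_upwards [eventually_ge_atTop 1] with n hn
    obtain ⟨m, rfl⟩ : ∃ m, n = m + 1 := ⟨n - 1, by omega⟩
    simp only [Nat.add_sub_cancel, key m]
    have hpos : (0:ℝ) < 2 ^ (m + 1 + 1) - 1 := by
      have : (1:ℝ) < 2 ^ (m + 1 + 1) := one_lt_pow₀ (by norm_num) (by omega)
      linarith
    have hd2 : (0:ℝ) < 4 - (1/2:ℝ)^m := by
      have : (1/2:ℝ)^m ≤ 1 := pow_le_one₀ (by norm_num) (by norm_num)
      linarith
    have h2 : (2:ℝ)^m * (1/2:ℝ)^m = 1 := by rw [← mul_pow]; norm_num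
    rw [div_eq_div_iff hd2.ne' hpos.ne']
    linear_combination (P m) * h2
  rw [show (1:ℝ)/4 * L = L / 4 by ring]
  exact Filter.Tendsto.congr' heq hdiv
end

section
/- Let a_n, b_n be defined by a_n = a_{n-1}b_{n-1} + b_{n-1}², b_n = a_{n-1}², with a_1 = 2, b_1 = 1. Then a_n > b_n when n is odd and a_n < b_n when n is even. -/
theorem stmt_9 (a b : ℕ → ℕ)
    (ha1 : a 1 = 2) (hb1 : b 1 = 1)
    (hra : ∀ n ≥ 2, a n = a (n - 1) * b (n - 1) + b (n - 1) ^ 2)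
    (hrb : ∀ n ≥ 2, b n = a (n - 1) ^ 2) :
    ∀ n ≥ 1, (Odd n → a n > b n) ∧ (Even n → a n < b n) := by
  have key : ∀ n ≥ 1, 1 ≤ a n ∧ 1 ≤ b n ∧
      (Odd n → a n * b n + b n ^ 2 < a n ^ 2) ∧ (Even n → a n < b n) := by
    intro n hn
    induction n, hn using Nat.le_induction with
    | base =>
      refine ⟨by omega, by omega, fun _ => by rw [ha1, hb1]; norm_num,
        fun h => absurd h (by decide)⟩
    | succ n hn ih =>
      obtain ⟨ha, hb, hodd, heven⟩ := ih
      have e1 := hra (n+1) (by omega)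
      have e2 := hrb (n+1) (by omega)
      simp only [Nat.add_sub_cancel] at e1 e2
      rcases Nat.even_or_odd n with he | ho
      · have hlt := heven he
        have hO : Odd (n+1) := Even.add_one he
        refine ⟨by nlinarith, by nlinarith, fun _ => ?_, fun h => ?_⟩
        · rw [e1, e2]
          have hx : 2 * a n ^ 2 < a n * b n + b n ^ 2 := by nlinarith
          have hp : 0 < a n * b n + b n ^ 2 := by positivity
          nlinarith [mul_lt_mul_of_pos_right hx hp,
            mul_lt_mul_of_pos_left hx (show 0 < a n ^ 2 by positivity)]
        · obtain ⟨k, hk⟩ := h; obtain ⟨m, hm⟩ := he; omega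
      · have hlt := hodd ho
        have hE : Even (n+1) := Odd.add_one ho
        refine ⟨by nlinarith, by nlinarith, fun h => ?_, fun _ => ?_⟩
        · obtain ⟨k, hk⟩ := h; obtain ⟨m, hm⟩ := ho; omega
        · rw [e1, e2]; nlinarith
  intro n hn
  obtain ⟨ha, hb, hodd, heven⟩ := key n hn
  exact ⟨fun h => by have := hodd h; nlinarith, heven⟩
end

section
/- Let c_n be a sequence of reals with c_n ≥ 1, c_1 ≥ 2, and c_n = c_{n-1}² + g_{n-1} where 0 ≤ g_{n-1} ≤ c_{n-1}². Then lim_{n→∞} (ln c_n)/(2^{n+1}−1) = (1/4)(ln c_1 + Σ_{j=1}^{∞} 2^{−j} ln(1 + g_j/c_j²)), and in particular this limit exists. -/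
theorem stmt_17 (c g : ℕ → ℝ)
    (hc : ∀ n ≥ 1, c n ≥ 1) (hc1 : c 1 ≥ 2)
    (hrec : ∀ n ≥ 2, c n = c (n - 1) ^ 2 + g (n - 1))
    (hg : ∀ j ≥ 1, 0 ≤ g j ∧ g j ≤ (c j) ^ 2) :
    Filter.Tendsto (fun n : ℕ => Real.log (c n) / (2 ^ (n + 1) - 1)) Filter.atTop
      (nhds ((1 / 4) * (Real.log (c 1) +
        ∑' j : ℕ, (1 / 2 : ℝ) ^ (j + 1) * Real.log (1 + g (j + 1) / (c (j + 1)) ^ 2)))) := by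
  set a : ℕ → ℝ := fun j => Real.log (1 + g (j + 1) / (c (j + 1)) ^ 2) with ha
  have hcpos : ∀ n : ℕ, (0 : ℝ) < c (n + 1) := fun n =>
    lt_of_lt_of_le one_pos (hc (n + 1) (by omega))
  have hq0 : ∀ j : ℕ, 0 ≤ g (j + 1) / (c (j + 1)) ^ 2 := fun j =>
    div_nonneg (hg (j + 1) (by omega)).1 (pow_pos (hcpos j) 2).le
  have hq1 : ∀ j : ℕ, g (j + 1) / (c (j + 1)) ^ 2 ≤ 1 := fun j =>
    (div_le_one (pow_pos (hcpos j) 2)).2 (hg (j + 1) (by omega)).2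
  have ha0 : ∀ j, 0 ≤ a j := fun j => Real.log_nonneg (by linarith [hq0 j])
  have ha2 : ∀ j, a j ≤ Real.log 2 := fun j =>
    Real.log_le_log (by linarith [hq0 j]) (by linarith [hq1 j])
  have hsum : Summable (fun j : ℕ => (1 / 2 : ℝ) ^ (j + 1) * a j) := by
    refine Summable.of_nonneg_of_le
      (fun j => mul_nonneg (by positivity) (ha0 j))
      (fun j => ?_)
      (((summable_geometric_of_lt_one (r := (1 : ℝ) / 2) (by norm_num) (by norm_num))).mul_right (Real.log 2))
    calc (1 / 2 : ℝ) ^ (j + 1) * a j ≤ (1 / 2 : ℝ) ^ (j + 1) * Real.log 2 :=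
          mul_le_mul_of_nonneg_left (ha2 j) (by positivity)
      _ ≤ (1 / 2 : ℝ) ^ j * Real.log 2 := by
          apply mul_le_mul_of_nonneg_right _ (Real.log_nonneg (by norm_num))
          apply pow_le_pow_of_le_one (by norm_num) (by norm_num) (by omega)
  have hlog : ∀ m : ℕ, Real.log (c (m + 2)) = 2 * Real.log (c (m + 1)) + a m := by
    intro m
    have h := hrec (m + 2) (by omega)
    norm_num at h
    have hcp : (0 : ℝ) < c (m + 1) := hcpos m
    have hmul : c (m + 2) = c (m + 1) ^ 2 * (1 + g (m + 1) / (c (m + 1)) ^ 2) := by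
      rw [h]; field_simp
    rw [hmul, Real.log_mul (by positivity) (by nlinarith [hq0 m]), Real.log_pow]
    push_cast; ring
  have hdiv : ∀ n : ℕ, Real.log (c (n + 1)) / 2 ^ (n + 2) =
      (1 / 4) * (Real.log (c 1) + ∑ j ∈ Finset.range n, (1 / 2 : ℝ) ^ (j + 1) * a j) := by
    intro n
    induction n with
    | zero => simp; ring
    | succ n ih =>
      have hpow : ((1 : ℝ) / 2) ^ (n + 1) = 1 / 2 ^ (n + 1) := by
        rw [div_pow, one_pow]
      have h2 : (2 : ℝ) ^ (n + 2) ≠ 0 := by positivity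
      have h3 : (2 : ℝ) ^ (n + 1) ≠ 0 := by positivity
      rw [Finset.sum_range_succ, show n + 1 + 1 = n + 2 from rfl, hlog n]
      have ihe : Real.log (c (n + 1)) =
          2 ^ (n + 2) * ((1 / 4) * (Real.log (c 1) + ∑ j ∈ Finset.range n, (1 / 2 : ℝ) ^ (j + 1) * a j)) := by
        rw [← ih]; field_simp
      rw [ihe, hpow]
      have e1 : (2 : ℝ) ^ (n + 2 + 1) = 2 * 2 ^ (n + 2) := by ring
      have e2 : (2 : ℝ) ^ (n + 2) = 2 * 2 ^ (n + 1) := by ring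
      rw [e1]
      field_simp
      ring
  have T1 : Filter.Tendsto (fun n => ∑ j ∈ Finset.range n, (1 / 2 : ℝ) ^ (j + 1) * a j)
      Filter.atTop (nhds (∑' j : ℕ, (1 / 2 : ℝ) ^ (j + 1) * a j)) :=
    hsum.hasSum.tendsto_sum_nat
  have T2 : Filter.Tendsto (fun n : ℕ => Real.log (c (n + 1)) / 2 ^ (n + 2)) Filter.atTop
      (nhds ((1 / 4) * (Real.log (c 1) + ∑' j : ℕ, (1 / 2 : ℝ) ^ (j + 1) * a j))) := by
    simp only [hdiv]
    exact (Filter.Tendsto.const_add _ T1).const_mul _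
  have T3 : Filter.Tendsto (fun n : ℕ => (1 : ℝ) - (1 / 2 : ℝ) ^ (n + 2)) Filter.atTop (nhds 1) := by
    have h0 : Filter.Tendsto (fun n : ℕ => ((1 : ℝ) / 2) ^ (n + 2)) Filter.atTop (nhds 0) :=
      (tendsto_pow_atTop_nhds_zero_of_lt_one (by norm_num) (by norm_num)).comp
        (Filter.tendsto_add_atTop_nat 2)
    have := Filter.Tendsto.const_sub (1 : ℝ) h0
    simpa using this
  rw [← Filter.tendsto_add_atTop_iff_nat 1]
  have := T2.div T3 one_ne_zero
  rw [div_one] at this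
  refine this.congr fun n => ?_
  have h1 : (1 : ℝ) < 2 ^ (n + 2) := one_lt_pow₀ (by norm_num) (by omega)
  have h2 : (2 : ℝ) ^ (n + 2) ≠ 0 := by positivity
  have h3 : (2 : ℝ) ^ (n + 2) - 1 ≠ 0 := by linarith
  have hpow : ((1 : ℝ) / 2) ^ (n + 2) = 1 / 2 ^ (n + 2) := by rw [div_pow, one_pow]
  show Real.log (c (n + 1)) / 2 ^ (n + 2) / (1 - (1 / 2 : ℝ) ^ (n + 2)) =
    Real.log (c (n + 1)) / (2 ^ (n + 1 + 1) - 1)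
  rw [hpow, show n + 1 + 1 = n + 2 from rfl]
  field_simp
end
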